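/- Let 2 ≤ r ≤ k and let H be a pure (n, K_k^r)-good r-uniform hypergraph with q = n/(k+1) constituents, q ≥ 1. Then ι(H, K_k^r) = q = n/(k+1). -/

import Mathlib

open scoped Classical

noncomputable section

/-- A (finite) hypergraph: a finite vertex set together with a finite
set of edges, each edge being a subset of the vertex set. -/
structure FinHypergraph (V : Type*) where
  verts : Finset V
  edges : Finset (Finset V)
  edge_sub : ∀ e ∈ edges, e ⊆ verts

namespace FinHypergraph

variable {V : Type*} [DecidableEq V]

/-- `H` is `r`-uniform if every edge has exactly `r` vertices. -/
def IsUniform (H : FinHypergraph V) (r : ℕ) : Prop :=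
  ∀ e ∈ H.edges, e.card = r

/-- The closed neighbourhood `N_H[D]` of a set `D` of vertices. -/
def closedNbhd (H : FinHypergraph V) (D : Finset V) : Finset V :=
  D ∪ H.verts.filter (fun w => ∃ e ∈ H.edges, w ∈ e ∧ ∃ v ∈ D, v ∈ e)

/-- The `s`-th shadow hypergraph `H^(s)`: same vertices, edges are all
`s`-element subsets of edges of `H`. -/
def shadow (H : FinHypergraph V) (s : ℕ) : FinHypergraph V where
  verts := H.verts
  edges := H.edges.biUnion (fun e => e.powersetCard s)
  edge_sub := by
    intro a ha
    rw [Finset.mem_biUnion] at ha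
    obtain ⟨e, he, hae⟩ := ha
    exact (Finset.mem_powersetCard.mp hae).1.trans (H.edge_sub e he)

/-- The subhypergraph of `H` induced by a vertex set `X`. -/
def induce (H : FinHypergraph V) (X : Finset V) : FinHypergraph V where
  verts := X
  edges := H.edges.filter (fun e => e ⊆ X)
  edge_sub := fun _ he => (Finset.mem_filter.mp he).2

/-- `H` contains a copy of `K_k^r`, the complete `r`-uniform hypergraph on
`k` vertices: a `k`-set of vertices all of whose `r`-subsets are edges. -/
def HasCliqueCopy (H : FinHypergraph V) (k r : ℕ) : Prop :=
  ∃ S : Finset V, S ⊆ H.verts ∧ S.card = k ∧ ∀ A ∈ S.powersetCard r, A ∈ H.edges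

/-- `D` is a `K_k^r`-isolating set of `H`: deleting `N_H[D]` leaves no copy of `K_k^r`. -/
def IsIsolating (H : FinHypergraph V) (k r : ℕ) (D : Finset V) : Prop :=
  D ⊆ H.verts ∧ ¬ (H.induce (H.verts \ H.closedNbhd D)).HasCliqueCopy k r

/-- `ι(H, K_k^r)`: the minimum size of a `K_k^r`-isolating set of `H`. -/
def iso (H : FinHypergraph V) (k r : ℕ) : ℕ :=
  sInf {n | ∃ D : Finset V, H.IsIsolating k r D ∧ D.card = n}

/-- `D` is a dominating set of `H`. -/
def IsDominating (H : FinHypergraph V) (D : Finset V) : Prop :=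
  D ⊆ H.verts ∧ H.verts ⊆ H.closedNbhd D

/-- The domination number `γ(H)`. -/
def domNum (H : FinHypergraph V) : ℕ :=
  sInf {n | ∃ D : Finset V, H.IsDominating D ∧ D.card = n}

/-- Two vertices are related if they lie in a common edge. -/
def edgeRel (H : FinHypergraph V) (v w : V) : Prop :=
  ∃ e ∈ H.edges, v ∈ e ∧ w ∈ e

/-- `H` is connected: any two vertices are joined by a chain of pairwise
intersecting edges (equivalently, by the reflexive-transitive closure of
sharing an edge). -/
def Connected (H : FinHypergraph V) : Prop :=
  ∀ v ∈ H.verts, ∀ w ∈ H.verts, Relation.ReflTransGen H.edgeRel v w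

/-- `H` is a copy of `K_k^r`: it has `k` vertices and its edges are exactly
all `r`-subsets of its vertex set. -/
def IsCompleteCopy (H : FinHypergraph V) (k r : ℕ) : Prop :=
  H.verts.card = k ∧ H.edges = H.verts.powersetCard r

/-- `H` is a copy of the 5-cycle `C₅` (as a 2-uniform hypergraph). -/
def IsC5Copy (H : FinHypergraph V) : Prop :=
  ∃ f : Fin 5 → V, Function.Injective f ∧
    H.verts = Finset.univ.image f ∧
    H.edges = Finset.univ.image (fun i : Fin 5 => ({f i, f (i + 1)} : Finset V))

end FinHypergraph

open FinHypergraph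

/-! The blocks `{v i} ∪ F i` are pairwise disjoint and every edge lies inside one block or among
the `v i`. So an edge meeting `F i` stays in its block, and every isolating set must meet every
block. Conversely, a `K_k^r`-copy avoiding the `v i` is confined to one `F i`, hence equals it,
but each `F i` contains a neighbour of `v i` through `W i`. -/

open Function

theorem Finset.card_le_card_of_forall_inter_nonempty {ι V : Type*} [Fintype ι] [DecidableEq V]
    {B : ι → Finset V} {D : Finset V} (hB : Pairwise (Disjoint on B))
    (hD : ∀ i, (B i ∩ D).Nonempty) : Fintype.card ι ≤ D.card := by
  choose f hf using hD
  have hinj : Set.InjOn f (Finset.univ : Finset ι) := fun i _ j _ hij => by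
    by_contra hne
    exact Finset.disjoint_left.mp (hB hne) (Finset.mem_inter.mp (hf i)).1
      (hij ▸ (Finset.mem_inter.mp (hf j)).1)
  exact Finset.card_le_card_of_injOn f (fun i _ => (Finset.mem_inter.mp (hf i)).2) hinj

namespace FinHypergraph

variable {V : Type*}

def IsClique (H : FinHypergraph V) (r : ℕ) (S : Finset V) : Prop :=
  ∀ A ∈ S.powersetCard r, A ∈ H.edges

section ClosedNbhd

variable [DecidableEq V] {H : FinHypergraph V} {D : Finset V} {u w : V}

theorem mem_closedNbhd :
    w ∈ H.closedNbhd D ↔ w ∈ D ∨ w ∈ H.verts ∧ ∃ e ∈ H.edges, w ∈ e ∧ ∃ d ∈ D, d ∈ e := by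
  simp only [closedNbhd, Finset.mem_union, Finset.mem_filter]

theorem subset_closedNbhd : D ⊆ H.closedNbhd D := Finset.subset_union_left

theorem mem_closedNbhd_of_mem_edge {e : Finset V} {d : V} (he : e ∈ H.edges) (hue : u ∈ e)
    (hde : d ∈ e) (hd : d ∈ D) : u ∈ H.closedNbhd D :=
  mem_closedNbhd.mpr (Or.inr ⟨H.edge_sub e he hue, e, he, hue, d, hd, hde⟩)

theorem not_disjoint_closedNbhd_of_mem_edge {S e : Finset V} {d : V} (he : e ∈ H.edges)
    (heS : e ⊆ insert d S) (hde : d ∈ e) (hd : d ∈ D) (hcard : 2 ≤ e.card) :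
    ¬ Disjoint S (H.closedNbhd D) := by
  obtain ⟨u, hue, hud⟩ := Finset.exists_mem_ne (s := e) (by omega) d
  exact Finset.not_disjoint_iff.mpr ⟨u, (Finset.mem_insert.mp (heS hue)).resolve_left hud,
    mem_closedNbhd_of_mem_edge he hue hde hd⟩

theorem isIsolating_iff {k r : ℕ} :
    H.IsIsolating k r D ↔ D ⊆ H.verts ∧
      ∀ S ⊆ H.verts, S.card = k → H.IsClique r S → ¬ Disjoint S (H.closedNbhd D) := by
  refine and_congr_right fun _ => ?_
  simp only [HasCliqueCopy, induce, IsClique, Finset.subset_sdiff, Finset.mem_filter]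
  constructor
  · rintro hno S hSV hcard hS hdisj
    exact hno ⟨S, ⟨hSV, hdisj⟩, hcard, fun A hA =>
      ⟨hS A hA, (Finset.mem_powersetCard.mp hA).1.trans hSV,
        Finset.disjoint_of_subset_left (Finset.mem_powersetCard.mp hA).1 hdisj⟩⟩
  · rintro h ⟨S, ⟨hSV, hdisj⟩, hcard, hS⟩
    exact h S hSV hcard (fun A hA => (hS A hA).1) hdisj

theorem iso_eq_card {k r : ℕ} (hD : H.IsIsolating k r D)
    (hmin : ∀ D', H.IsIsolating k r D' → D.card ≤ D'.card) : H.iso k r = D.card := by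
  have hmem : D.card ∈ {n | ∃ D : Finset V, H.IsIsolating k r D ∧ D.card = n} := ⟨D, hD, rfl⟩
  refine le_antisymm (Nat.sInf_le hmem) ?_
  obtain ⟨D', hD', hcard⟩ := Nat.sInf_mem ⟨_, hmem⟩
  rw [iso, ← hcard]
  exact hmin D' hD'

theorem IsClique.edgeRel {r : ℕ} {S : Finset V} {x y : V}
    (hS : H.IsClique r S) (hr : 2 ≤ r) (hrS : r ≤ S.card) (hx : x ∈ S) (hy : y ∈ S) :
    H.edgeRel x y := by
  have hpair : ({x, y} : Finset V) ⊆ S :=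
    Finset.insert_subset hx (Finset.singleton_subset_iff.mpr hy)
  obtain ⟨A, hxyA, hAS, hAcard⟩ := Finset.exists_subsuperset_card_eq hpair
    ((Finset.card_le_two).trans hr) hrS
  exact ⟨A, hS A (Finset.mem_powersetCard.mpr ⟨hAS, hAcard⟩), hxyA (by simp), hxyA (by simp)⟩

end ClosedNbhd

section Blocks

variable {ι : Type*} {H : FinHypergraph V} {B : ι → Finset V} {D : Finset V}

theorem subset_block_of_mem_edge (hB : Pairwise (Disjoint on B))
    (hedge : ∀ e ∈ H.edges, e ⊆ D ∨ ∃ i, e ⊆ B i) {i : ι} {x : V} {e : Finset V}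
    (hxB : x ∈ B i) (hxD : x ∉ D) (he : e ∈ H.edges) (hxe : x ∈ e) : e ⊆ B i := by
  obtain heD | ⟨j, hej⟩ := hedge e he
  · exact absurd (heD hxe) hxD
  · obtain rfl : j = i := by
      by_contra hne
      exact Finset.disjoint_left.mp (hB hne) (hej hxe) hxB
    exact hej

variable [DecidableEq V]

theorem IsClique.subset_block (hB : Pairwise (Disjoint on B))
    (hedge : ∀ e ∈ H.edges, e ⊆ D ∨ ∃ i, e ⊆ B i) {r : ℕ} {S : Finset V}
    (hS : H.IsClique r S) (hr : 2 ≤ r) (hrS : r ≤ S.card) (hSD : Disjoint S D)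
    {i : ι} {x : V} (hxS : x ∈ S) (hxB : x ∈ B i) : S ⊆ B i := fun y hyS => by
  obtain ⟨e, he, hxe, hye⟩ := hS.edgeRel hr hrS hxS hyS
  exact subset_block_of_mem_edge hB hedge hxB (Finset.disjoint_left.mp hSD hxS) he hxe hye

theorem IsIsolating.inter_block_nonempty (hB : Pairwise (Disjoint on B))
    (hedge : ∀ e ∈ H.edges, e ⊆ D ∨ ∃ i, e ⊆ B i) {k r : ℕ} {D' S : Finset V}
    (hD' : H.IsIsolating k r D') {i : ι} (hSB : S ⊆ B i) (hSD : Disjoint S D)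
    (hSV : S ⊆ H.verts) (hcard : S.card = k) (hS : H.IsClique r S) : (B i ∩ D').Nonempty := by
  obtain ⟨x, hxS, hxN⟩ := Finset.not_disjoint_iff.mp (isIsolating_iff.mp hD' |>.2 S hSV hcard hS)
  obtain hxD' | ⟨-, e, he, hxe, d, hdD', hde⟩ := mem_closedNbhd.mp hxN
  · exact ⟨x, Finset.mem_inter.mpr ⟨hSB hxS, hxD'⟩⟩
  · have heB := subset_block_of_mem_edge hB hedge (hSB hxS) (Finset.disjoint_left.mp hSD hxS)
      he hxe
    exact ⟨d, Finset.mem_inter.mpr ⟨heB hde, hdD'⟩⟩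

end Blocks

section PendantBlocks

variable [DecidableEq V] {ι : Type*} {H : FinHypergraph V} {v : ι → V} {F : ι → Finset V}

theorem pairwise_disjoint_insert (hvinj : Injective v) (hvF : ∀ i j, v i ∉ F j)
    (hFdisj : ∀ i j, i ≠ j → Disjoint (F i) (F j)) :
    Pairwise (Disjoint on fun i => insert (v i) (F i)) := fun i j hij => by
  simp only [onFun, Finset.disjoint_insert_left, Finset.disjoint_insert_right,
    Finset.mem_insert, not_or]
  exact ⟨⟨hvinj.ne hij.symm, hvF j i⟩, hvF i j, hFdisj i j hij⟩

theorem edges_subset_image_or_block {T : FinHypergraph V} {W : ι → Finset (Finset V)}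
    [Fintype ι] {r : ℕ} (hTverts : T.verts = Finset.univ.image v)
    (hW : ∀ i, ∀ e ∈ W i, e ⊆ insert (v i) (F i))
    (hedges : H.edges = T.edges ∪ Finset.univ.biUnion fun i => (F i).powersetCard r ∪ W i) :
    ∀ e ∈ H.edges, e ⊆ Finset.univ.image v ∨ ∃ i, e ⊆ insert (v i) (F i) := by
  intro e he
  rw [hedges, Finset.mem_union, Finset.mem_biUnion] at he
  obtain heT | ⟨i, -, hei⟩ := he
  · exact Or.inl (hTverts ▸ T.edge_sub e heT)
  obtain hF | hWi := Finset.mem_union.mp hei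
  · exact Or.inr ⟨i, (Finset.mem_powersetCard.mp hF).1.trans (Finset.subset_insert _ _)⟩
  · exact Or.inr ⟨i, hW i e hWi⟩

theorem card_le_card_of_isIsolating [Fintype ι]
    (hB : Pairwise (Disjoint on fun i => insert (v i) (F i)))
    (hedge : ∀ e ∈ H.edges, e ⊆ Finset.univ.image v ∨ ∃ i, e ⊆ insert (v i) (F i))
    (hvF : ∀ i j, v i ∉ F j) {k r : ℕ} (hFverts : ∀ i, F i ⊆ H.verts)
    (hFcard : ∀ i, (F i).card = k) (hF : ∀ i, H.IsClique r (F i)) {D : Finset V}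
    (hD : H.IsIsolating k r D) : Fintype.card ι ≤ D.card := by
  refine Finset.card_le_card_of_forall_inter_nonempty hB fun i => ?_
  have hFv : Disjoint (F i) (Finset.univ.image v) := Finset.disjoint_left.mpr fun x hx hxv => by
    obtain ⟨j, -, rfl⟩ := Finset.mem_image.mp hxv
    exact hvF j i hx
  exact hD.inter_block_nonempty hB hedge (Finset.subset_insert _ _) hFv (hFverts i) (hFcard i)
    (hF i)

theorem isIsolating_image [Fintype ι] (hB : Pairwise (Disjoint on fun i => insert (v i) (F i)))
    (hedge : ∀ e ∈ H.edges, e ⊆ Finset.univ.image v ∨ ∃ i, e ⊆ insert (v i) (F i))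
    (hverts : H.verts = Finset.univ.biUnion fun i => insert (v i) (F i)) {k r : ℕ}
    (hr : 2 ≤ r) (hrk : r ≤ k) (hFcard : ∀ i, (F i).card ≤ k)
    (hdom : ∀ i, ¬ Disjoint (F i) (H.closedNbhd (Finset.univ.image v))) :
    H.IsIsolating k r (Finset.univ.image v) := by
  refine isIsolating_iff.mpr ⟨fun x hx => ?_, fun S hSV hcard hS hdisj => ?_⟩
  · obtain ⟨i, -, rfl⟩ := Finset.mem_image.mp hx
    exact hverts ▸ Finset.mem_biUnion.mpr ⟨i, Finset.mem_univ i, Finset.mem_insert_self _ _⟩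
  have hSD : Disjoint S (Finset.univ.image v) := hdisj.mono_right subset_closedNbhd
  obtain ⟨x, hxS⟩ := Finset.card_pos.mp (by omega : 0 < S.card)
  obtain ⟨i, -, hxB⟩ := Finset.mem_biUnion.mp (hverts ▸ hSV hxS)
  have hSF : S ⊆ F i := fun y hyS => by
    have hyB := hS.subset_block hB hedge hr (hcard ▸ hrk) hSD hxS hxB hyS
    refine (Finset.mem_insert.mp hyB).resolve_left fun hyv => ?_
    exact Finset.disjoint_left.mp hSD hyS (hyv ▸ Finset.mem_image_of_mem v (Finset.mem_univ i))
  exact hdom i (Finset.eq_of_subset_of_card_le hSF (hcard ▸ hFcard i) ▸ hdisj)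

end PendantBlocks

end FinHypergraph

theorem stmt12_general {V : Type*} [DecidableEq V] (r k q : ℕ) (hr : 2 ≤ r) (hrk : r ≤ k)
    (H T : FinHypergraph V)
    (F : Fin q → Finset V) (v : Fin q → V) (W : Fin q → Finset (Finset V))
    (hFcard : ∀ i, (F i).card = k)
    (hvinj : Function.Injective v)
    (hvF : ∀ i j, v i ∉ F j)
    (hFdisj : ∀ i j, i ≠ j → Disjoint (F i) (F j))
    (hW : ∀ i, (W i).Nonempty ∧
      ∀ e ∈ W i, e ⊆ insert (v i) (F i) ∧ v i ∈ e ∧ e.card = r)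
    (hTverts : T.verts = Finset.univ.image v)
    (hverts : H.verts = Finset.univ.biUnion (fun i => insert (v i) (F i)))
    (hedges : H.edges =
      T.edges ∪ Finset.univ.biUnion (fun i => (F i).powersetCard r ∪ W i)) :
    H.iso k r = q ∧ H.verts.card = q * (k + 1) := by
  have hB := pairwise_disjoint_insert hvinj hvF hFdisj
  have hedge := edges_subset_image_or_block hTverts (fun i e he => ((hW i).2 e he).1) hedges
  have hFedge : ∀ i, ∀ e ∈ (F i).powersetCard r ∪ W i, e ∈ H.edges := fun i e he =>
    hedges ▸ Finset.mem_union_right _ (Finset.mem_biUnion.mpr ⟨i, Finset.mem_univ i, he⟩)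
  have hFverts : ∀ i, F i ⊆ H.verts := fun i => hverts ▸
    (Finset.subset_insert (v i) _).trans
      (Finset.subset_biUnion_of_mem (fun i => insert (v i) (F i)) (Finset.mem_univ i))
  have hdom : ∀ i, ¬ Disjoint (F i) (H.closedNbhd (Finset.univ.image v)) := fun i => by
    obtain ⟨e, he⟩ := (hW i).1
    obtain ⟨heB, hve, hecard⟩ := (hW i).2 e he
    exact not_disjoint_closedNbhd_of_mem_edge (hFedge i e (Finset.mem_union_right _ he)) heB hve
      (Finset.mem_image_of_mem v (Finset.mem_univ i)) (by omega)
  have hiso := isIsolating_image hB hedge hverts hr hrk (fun i => (hFcard i).le) hdom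
  have hmin : ∀ D, H.IsIsolating k r D → (Finset.univ.image v).card ≤ D.card := fun D hD => by
    rw [Finset.card_image_of_injective _ hvinj, Finset.card_univ]
    exact card_le_card_of_isIsolating hB hedge hvF hFverts hFcard
      (fun i A hA => hFedge i A (Finset.mem_union_left _ hA)) hD
  refine ⟨by rw [iso_eq_card hiso hmin, Finset.card_image_of_injective _ hvinj]; simp, ?_⟩
  rw [hverts, Finset.card_biUnion fun i _ j _ hij => hB hij]
  simp [Finset.card_insert_of_notMem (hvF _ _), hFcard]

/-- For `2 ≤ r ≤ k`, a pure `(n, K_k^r)`-good `r`-graph `H` with `q ≥ 1`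
constituents satisfies `ι(H, K_k^r) = q` and `n = q(k+1)`.
Here `H` is built from pairwise disjoint `K_k^r`-copies with vertex sets
`F 1, …, F q`, connection vertices `v 1, …, v q`, nonempty families `W i` of
`r`-subsets of `{v i} ∪ F i` containing `v i`, and a connected quotient
`r`-graph `T` on `{v 1, …, v q}`. -/
theorem stmt12 {V : Type*} [DecidableEq V] (r k q : ℕ) (hr : 2 ≤ r) (hrk : r ≤ k)
    (hq : 1 ≤ q) (H T : FinHypergraph V)
    (F : Fin q → Finset V) (v : Fin q → V) (W : Fin q → Finset (Finset V))
    (hFcard : ∀ i, (F i).card = k)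
    (hvinj : Function.Injective v)
    (hvF : ∀ i j, v i ∉ F j)
    (hFdisj : ∀ i j, i ≠ j → Disjoint (F i) (F j))
    (hW : ∀ i, (W i).Nonempty ∧
      ∀ e ∈ W i, e ⊆ insert (v i) (F i) ∧ v i ∈ e ∧ e.card = r)
    (hT : T.Connected) (hTverts : T.verts = Finset.univ.image v)
    (hTunif : T.IsUniform r)
    (hverts : H.verts = Finset.univ.biUnion (fun i => insert (v i) (F i)))
    (hedges : H.edges =
      T.edges ∪ Finset.univ.biUnion (fun i => (F i).powersetCard r ∪ W i)) :
    H.iso k r = q ∧ H.verts.card = q * (k + 1) :=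
  stmt12_general r k q hr hrk H T F v W hFcard hvinj hvF hFdisj hW hTverts hverts hedges
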